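/- arXiv:2304.04340 — 5 statements merged into one kernel-verified Lean document; each statement's English description precedes it below -/
import Mathlib

section
/- The modular map is a group homomorphism: if E is a quasi-normal subgroup of a group G (i.e., for every g in G, the subgroup E ∩ gEg⁻¹ has finite index in both E and gEg⁻¹), then the map m : G → ℚ₊* defined by m(g) = [E : E ∩ gEg⁻¹] / [gEg⁻¹ : E ∩ gEg⁻¹] satisfies m(gh) = m(g)·m(h) for all g, h in G. -/
/-- The conjugate subgroup `gEg⁻¹`. -/
def conjSubgroup {G : Type*} [Group G] (g : G) (E : Subgroup G) : Subgroup G :=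
  E.map (MulAut.conj g).toMonoidHom

/-- The modular map `m(g) = [E : E ∩ gEg⁻¹] / [gEg⁻¹ : E ∩ gEg⁻¹]` as a rational number,
where `[K : H ∩ K]` is `Subgroup.relindex H K`. -/
noncomputable def modularMap {G : Type*} [Group G] (E : Subgroup G) (g : G) : ℚ :=
  ((conjSubgroup g E).relIndex E : ℚ) / (E.relIndex (conjSubgroup g E) : ℚ)

/-!
For commensurable `A, B` the ratio `r(A, B) = [A : A ∩ B] / [B : A ∩ B]` equals `[A : D] / [B : D]`
for every subgroup `D ≤ A ∩ B` of finite index; taking `D = A ∩ B ∩ C` gives the cocycle identity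
`r(A, B) r(B, C) = r(A, C)`. As `r` is invariant under conjugation and `m(g) = r(E, gEg⁻¹)`,
`m(gh) = r(E, gEg⁻¹) r(gEg⁻¹, g(hEh⁻¹)g⁻¹) = m(g) r(E, hEh⁻¹) = m(g) m(h)`.
-/

namespace Subgroup

variable {G G' : Type*} [Group G] [Group G']

noncomputable def relIndexRatio (A B : Subgroup G) : ℚ :=
  (B.relIndex A : ℚ) / (A.relIndex B : ℚ)

theorem relIndexRatio_eq_div_of_le {A B D : Subgroup G} (hDA : D ≤ A) (hDB : D ≤ B)
    (hD : D.relIndex A ≠ 0) :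
    relIndexRatio A B = (D.relIndex A : ℚ) / (D.relIndex B : ℚ) := by
  have hA : D.relIndex (A ⊓ B) * B.relIndex A = D.relIndex A := by
    rw [← inf_relIndex_left A B, relIndex_mul_relIndex _ _ _ (le_inf hDA hDB) inf_le_left]
  have hB : D.relIndex (A ⊓ B) * A.relIndex B = D.relIndex B := by
    rw [← inf_relIndex_right A B, relIndex_mul_relIndex _ _ _ (le_inf hDA hDB) inf_le_right]
  have hAB : (D.relIndex (A ⊓ B) : ℚ) ≠ 0 := by
    exact_mod_cast left_ne_zero_of_mul (hA ▸ hD)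
  rw [relIndexRatio, ← hA, ← hB, Nat.cast_mul, Nat.cast_mul, mul_div_mul_left _ _ hAB]

theorem relIndexRatio_mul_relIndexRatio {A B C : Subgroup G} (hAB : A.Commensurable B)
    (hBC : B.Commensurable C) :
    relIndexRatio A B * relIndexRatio B C = relIndexRatio A C := by
  have hAC := hAB.trans hBC
  set D := A ⊓ B ⊓ C
  have hD : ∀ M : Subgroup G, A.relIndex M ≠ 0 → B.relIndex M ≠ 0 → C.relIndex M ≠ 0 →
      D.relIndex M ≠ 0 :=
    fun M hA hB hC ↦ relIndex_inf_ne_zero (relIndex_inf_ne_zero hA hB) hC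
  have hDA : D ≤ A := inf_le_left.trans inf_le_left
  have hDB : D ≤ B := inf_le_left.trans inf_le_right
  have hDC : D ≤ C := inf_le_right
  have hA : D.relIndex A ≠ 0 := hD A (by simp) hAB.2 hAC.2
  have hB : D.relIndex B ≠ 0 := hD B hAB.1 (by simp) hBC.2
  rw [relIndexRatio_eq_div_of_le hDA hDB hA, relIndexRatio_eq_div_of_le hDB hDC hB,
    relIndexRatio_eq_div_of_le hDA hDC hA, div_mul_div_cancel₀ (by exact_mod_cast hB)]

theorem relIndexRatio_map_map {f : G →* G'} (hf : Function.Injective f) (A B : Subgroup G) :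
    relIndexRatio (A.map f) (B.map f) = relIndexRatio A B := by
  simp only [relIndexRatio, relIndex_map_map_of_injective _ _ hf]

theorem Commensurable.map {f : G →* G'} (hf : Function.Injective f) {A B : Subgroup G}
    (h : A.Commensurable B) : (A.map f).Commensurable (B.map f) := by
  simpa only [Commensurable, relIndex_map_map_of_injective _ _ hf] using h

end Subgroup

open Subgroup

theorem conjSubgroup_mul {G : Type*} [Group G] (g h : G) (E : Subgroup G) :
    conjSubgroup (g * h) E = conjSubgroup g (conjSubgroup h E) := by
  rw [conjSubgroup, conjSubgroup, conjSubgroup, map_map, map_mul]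
  rfl

/-- If `E` is quasi-normal in `G` (every conjugate `gEg⁻¹` is commensurable with `E`),
then the modular map is multiplicative: `m(gh) = m(g) m(h)`. -/
theorem modularMap_mul {G : Type*} [Group G] (E : Subgroup G)
    (hqn : ∀ g : G, (conjSubgroup g E).relIndex E ≠ 0 ∧ E.relIndex (conjSubgroup g E) ≠ 0)
    (g h : G) :
    modularMap E (g * h) = modularMap E g * modularMap E h := by
  have hE : ∀ x, E.Commensurable (conjSubgroup x E) := fun x ↦ (hqn x).symm
  have hg : Function.Injective (MulAut.conj g).toMonoidHom := (MulAut.conj g).injective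
  calc modularMap E (g * h) = relIndexRatio E (conjSubgroup (g * h) E) := rfl
    _ = relIndexRatio E (conjSubgroup g E) *
          relIndexRatio (conjSubgroup g E) (conjSubgroup g (conjSubgroup h E)) := by
        rw [conjSubgroup_mul]
        exact (relIndexRatio_mul_relIndexRatio (hE g) ((hE h).map hg)).symm
    _ = relIndexRatio E (conjSubgroup g E) * relIndexRatio E (conjSubgroup h E) := by
        congr 1
        exact relIndexRatio_map_map hg E (conjSubgroup h E)
    _ = modularMap E g * modularMap E h := rfl
end

section
/- For quasi-normal E ≤ G and g, h ∈ G, writing ᵍE = gEg⁻¹, one has [E : E ∩ ᵍE] / [ᵍE : E ∩ ᵍE] = [E : E ∩ ᵍE ∩ ᵍʰE] / [ᵍE : E ∩ ᵍE ∩ ᵍʰE], i.e., the modular ratio of g can be computed after intersecting with the additional conjugate ghE(gh)⁻¹. -/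
namespace Subgroup

variable {G : Type*} [Group G]

theorem relIndex_inf_div_relIndex_inf {R : Type*} [Semifield R] [CharZero R]
    {H K L : Subgroup G} (hL : L.relIndex (H ⊓ K) ≠ 0) :
    ((K ⊓ L).relIndex H : R) / (H ⊓ L).relIndex K = (K.relIndex H : R) / H.relIndex K := by
  rw [inf_comm K L, inf_comm H L, ← relIndex_inf_mul_relIndex, ← relIndex_inf_mul_relIndex,
    inf_comm K H, Nat.cast_mul, Nat.cast_mul, mul_div_mul_left _ _ (Nat.cast_ne_zero.mpr hL)]

end Subgroup

/-- For a quasi-normal subgroup `E ≤ G` and `g, h ∈ G`, writing `ᵍE = gEg⁻¹`, one has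
`[E : E ∩ ᵍE] / [ᵍE : E ∩ ᵍE] = [E : E ∩ ᵍE ∩ ᵍʰE] / [ᵍE : E ∩ ᵍE ∩ ᵍʰE]`:
the modular ratio of `g` can be computed after intersecting with the additional conjugate
`(gh)E(gh)⁻¹`.  Here `[K : H ∩ K]` is `Subgroup.relindex H K`. -/
theorem modular_ratio_intersect {G : Type*} [Group G] (E : Subgroup G)
    (hqn : ∀ k : G, (conjSubgroup k E).relIndex E ≠ 0 ∧ E.relIndex (conjSubgroup k E) ≠ 0)
    (g h : G) :
    ((conjSubgroup g E).relIndex E : ℚ) / (E.relIndex (conjSubgroup g E) : ℚ) =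
      ((conjSubgroup g E ⊓ conjSubgroup (g * h) E).relIndex E : ℚ) /
        ((E ⊓ conjSubgroup (g * h) E).relIndex (conjSubgroup g E) : ℚ) :=
  (Subgroup.relIndex_inf_div_relIndex_inf
    (mt (Subgroup.relIndex_eq_zero_of_le_right inf_le_left) (hqn (g * h)).1)).symm
end

section
/- In the HNN extension G = ⟨E, t | ∀a ∈ E₋, t a t⁻¹ = τ(a)⟩, where τ : E₋ → E₊ is an isomorphism between finite-index normal subgroups E₋, E₊ of the group E, the subgroup E is quasi-normal in G: for every g ∈ G, E ∩ gEg⁻¹ has finite index in both E and gEg⁻¹. -/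
/-!
The image of `E` is commensurated by every element of `G`. The commensurator of a subgroup is a
subgroup containing its normalizer, hence containing `E`; it also contains `t`, since conjugation
by `t` carries `E₋` onto `E₊`, and both have finite index in `E`. As `E` and `t` generate `G`,
the commensurator is all of `G`.
-/

open HNNExtension

open scoped Pointwise
open Subgroup Subgroup.Commensurable

theorem conjSubgroup_eq_toConjAct_smul {G : Type*} [Group G] (g : G) (H : Subgroup G) :
    conjSubgroup g H = ConjAct.toConjAct g • H :=
  rfl

namespace Subgroup

variable {G : Type*} [Group G]

theorem Commensurable.of_le {H K : Subgroup G} (hKH : K ≤ H) (hK : K.relIndex H ≠ 0) :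
    Commensurable K H :=
  ⟨hK, by simp [relIndex_eq_one.mpr hKH]⟩

theorem normalizer_le_commensurator (H : Subgroup G) : normalizer H ≤ commensurator H :=
  fun _ hg ↦ by
    rw [commensurator_mem_iff, conjAct_pointwise_smul_eq_self hg]

theorem mem_commensurator_of_smul_eq {H A B : Subgroup G} {g : G} (hA : Commensurable A H)
    (hB : Commensurable B H) (hg : ConjAct.toConjAct g • A = B) : g ∈ commensurator H :=
  (hA.conj _).symm.trans (hg ▸ hB)

end Subgroup

namespace HNNExtension

variable {G : Type*} [Group G] {A B : Subgroup G} (φ : A ≃* B)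

theorem toConjAct_t_smul_map_of :
    ConjAct.toConjAct (t : HNNExtension G A B φ) • A.map (of (φ := φ)) = B.map (of (φ := φ)) := by
  ext x
  simp only [mem_smul_pointwise_iff_exists, mem_map, ConjAct.toConjAct_smul]
  constructor
  · rintro ⟨_, ⟨a, ha, rfl⟩, rfl⟩
    exact ⟨φ ⟨a, ha⟩, (φ ⟨a, ha⟩).2, equiv_eq_conj _⟩
  · rintro ⟨b, hb, rfl⟩
    refine ⟨of (φ.symm ⟨b, hb⟩ : G), ⟨_, (φ.symm ⟨b, hb⟩).2, rfl⟩, ?_⟩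
    rw [← equiv_eq_conj, MulEquiv.apply_symm_apply]

theorem commensurable_map_of_range {H : Subgroup G} (hH : H.index ≠ 0) :
    Commensurable (H.map of) (of : G →* HNNExtension G A B φ).range := by
  refine .of_le (map_le_range _ _) ?_
  rwa [MonoidHom.range_eq_map, relIndex_map_map_of_injective _ _ (of_injective φ),
    relIndex_top_right]

theorem commensurator_range_of (hA : A.index ≠ 0) (hB : B.index ≠ 0) :
    commensurator (of : G →* HNNExtension G A B φ).range = ⊤ := by
  refine (eq_top_iff' _).mpr fun g ↦ ?_
  induction g using HNNExtension.induction_on with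
  | of e => exact normalizer_le_commensurator _ (le_normalizer ⟨e, rfl⟩)
  | t =>
    exact mem_commensurator_of_smul_eq (commensurable_map_of_range φ hA)
      (commensurable_map_of_range φ hB) (toConjAct_t_smul_map_of φ)
  | mul x y hx hy => exact mul_mem hx hy
  | inv x hx => exact inv_mem hx

end HNNExtension

theorem hnn_base_quasiNormal_general {E : Type*} [Group E] (Em Ep : Subgroup E)
    (hEm : Em.index ≠ 0) (hEp : Ep.index ≠ 0)
    (τ : Em ≃* Ep) (g : HNNExtension E Em Ep τ) :
    (conjSubgroup g (HNNExtension.of (φ := τ)).range).relIndex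
        (HNNExtension.of (φ := τ)).range ≠ 0 ∧
    ((HNNExtension.of (φ := τ)).range).relIndex
        (conjSubgroup g (HNNExtension.of (φ := τ)).range) ≠ 0 := by
  have hg : g ∈ commensurator (of (φ := τ)).range := by
    rw [commensurator_range_of τ hEm hEp]
    exact mem_top g
  rw [conjSubgroup_eq_toConjAct_smul]
  exact hg

/-- In the HNN extension `G = ⟨E, t ∣ ∀ a ∈ E₋, t a t⁻¹ = τ(a)⟩`, where `τ : E₋ → E₊` is an
isomorphism between finite-index normal subgroups `E₋`, `E₊` of `E`, the (image of the) subgroup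
`E` is quasi-normal in `G`: for every `g ∈ G`, `E ∩ gEg⁻¹` has finite index in both `E` and
`gEg⁻¹`. -/
theorem hnn_base_quasiNormal {E : Type*} [Group E] (Em Ep : Subgroup E)
    [Em.Normal] [Ep.Normal] (hEm : Em.index ≠ 0) (hEp : Ep.index ≠ 0)
    (τ : Em ≃* Ep) (g : HNNExtension E Em Ep τ) :
    (conjSubgroup g (HNNExtension.of (φ := τ)).range).relIndex
        (HNNExtension.of (φ := τ)).range ≠ 0 ∧
    ((HNNExtension.of (φ := τ)).range).relIndex
        (conjSubgroup g (HNNExtension.of (φ := τ)).range) ≠ 0 :=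
  hnn_base_quasiNormal_general Em Ep hEm hEp τ g
end

section
/- Hyperfinite extensions split: let H be a countable group, E ⊴ H a normal subgroup, and H ↷ X a Borel action on a standard Borel space in which E acts trivially. Set ℋ = X ⋊ H, ℛ = ℛ(H/E ↷ X) the orbit equivalence relation, and q : ℋ → ℛ the quotient map (x, h) ↦ (x, h⁻¹x). If ℛ is hyperfinite, then there exists a Borel groupoid homomorphism σ : ℛ → ℋ with q ∘ σ = id_ℛ. -/
open MeasureTheory

/-- Auxiliary recursion: coherent group-element "selectors". -/
noncomputable def auxF {H : Type*} [Group H] {X : Type*} [MulAction H X]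
    (φ : ℕ → X → H) : ℕ → X → H
  | 0 => φ 0
  | (n+1) => fun x => auxF φ n x * φ (n+1) ((auxF φ n x)⁻¹ • x)

/-- Hyperfinite extensions split: let `H` be a countable group, `E ⊴ H` a normal subgroup, and
`H ↷ X` a Borel action on a standard Borel space in which `E` acts trivially.  Let
`ℛ = ℛ(H/E ↷ X)` be the orbit equivalence relation (which coincides with the `H`-orbit
relation since `E` acts trivially).  If `ℛ` is hyperfinite (an increasing union of Borel
equivalence relations with finite classes), then the quotient map `q : X ⋊ H → ℛ`,
`(x, h) ↦ (x, h⁻¹x)`, admits a Borel homomorphism section `σ : ℛ → X ⋊ H`.  Concretely, the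
section is encoded by a Borel cocycle `c : X → X → H` with `σ(x,y) = (x, c x y)`: it satisfies
`c x x = 1`, `(c x y)⁻¹ • x = y` on `ℛ`, and `c x y * c y z = c x z` on composable pairs. -/
theorem hyperfinite_extension_splits
    {H : Type*} [Group H] [Countable H] [MeasurableSpace H] [MeasurableSingletonClass H] {X : Type*} [MeasurableSpace X]
    [StandardBorelSpace X] [MulAction H X]
    (hmeas : ∀ h : H, Measurable fun x : X => h • x)
    (E : Subgroup H) [E.Normal] (htriv : ∀ a ∈ E, ∀ x : X, a • x = x)
    (R : Set (X × X)) (hR : R = {p : X × X | ∃ h : H, p.2 = h⁻¹ • p.1})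
    (hhyp : ∃ Rn : ℕ → Set (X × X),
      Monotone Rn ∧ (⋃ n, Rn n) = R ∧
      ∀ n, MeasurableSet (Rn n) ∧
        (∀ x : X, (x, x) ∈ Rn n) ∧
        (∀ x y, (x, y) ∈ Rn n → (y, x) ∈ Rn n) ∧
        (∀ x y z, (x, y) ∈ Rn n → (y, z) ∈ Rn n → (x, z) ∈ Rn n) ∧
        (∀ x : X, {y : X | (x, y) ∈ Rn n}.Finite)) :
    ∃ c : X → X → H,
      Measurable (fun p : X × X => c p.1 p.2) ∧
      (∀ x : X, c x x = 1) ∧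
      (∀ x y : X, (x, y) ∈ R → (c x y)⁻¹ • x = y) ∧
      (∀ x y z : X, (x, y) ∈ R → (y, z) ∈ R → c x y * c y z = c x z) := by
  classical
  obtain ⟨Rn, hmono, hunion, hprop⟩ := hhyp
  choose hRmeas hrefl hsymm htrans hfin using hprop
  obtain ⟨emb, hemb⟩ := exists_measurableEmbedding_real X
  obtain ⟨e, he⟩ := exists_surjective_nat H
  have hsub : ∀ n, Rn n ⊆ R := by
    intro n
    rw [← hunion]
    exact Set.subset_iUnion Rn n
  -- for (x,y) ∈ R, y has the form (e k)⁻¹ • x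
  have hform : ∀ n x y, (x, y) ∈ Rn n → ∃ k, y = (e k)⁻¹ • x := by
    intro n x y hxy
    have : (x, y) ∈ R := hsub n hxy
    rw [hR] at this
    obtain ⟨h, hh⟩ := this
    obtain ⟨k, rfl⟩ := he h
    exact ⟨k, hh⟩
  -- the selector predicate
  set P : ℕ → ℕ → X → Prop := fun n k x =>
    (x, (e k)⁻¹ • x) ∈ Rn n ∧
      ∀ j, (x, (e j)⁻¹ • x) ∈ Rn n → emb ((e k)⁻¹ • x) ≤ emb ((e j)⁻¹ • x) with hP
  have exP : ∀ n x, ∃ k, P n k x := by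
    intro n x
    obtain ⟨y₀, hy₀S, hy₀min⟩ :=
      Set.exists_min_image {y | (x, y) ∈ Rn n} emb (hfin n x) ⟨x, hrefl n x⟩
    obtain ⟨k, rfl⟩ := hform n x y₀ hy₀S
    exact ⟨k, hy₀S, fun j hj => hy₀min _ hj⟩
  set φ : ℕ → X → H := fun n x => e (Nat.find (exP n x)) with hφ
  set a : ℕ → X → X := fun n x => (φ n x)⁻¹ • x with ha
  have ha_mem : ∀ n x, (x, a n x) ∈ Rn n := fun n x => (Nat.find_spec (exP n x)).1
  have ha_min : ∀ n x y, (x, y) ∈ Rn n → emb (a n x) ≤ emb y := by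
    intro n x y hxy
    obtain ⟨j, rfl⟩ := hform n x y hxy
    exact (Nat.find_spec (exP n x)).2 j hxy
  have ha_const : ∀ n x y, (x, y) ∈ Rn n → a n x = a n y := by
    intro n x y hxy
    have h1 : (x, a n y) ∈ Rn n := htrans n _ _ _ hxy (ha_mem n y)
    have h2 : (y, a n x) ∈ Rn n := htrans n _ _ _ (hsymm n _ _ hxy) (ha_mem n x)
    exact hemb.injective (le_antisymm (ha_min n x _ h1) (ha_min n y _ h2))
  set f : ℕ → X → H := auxF φ with hf
  have hbase : ∀ n x, (f n x)⁻¹ • x = a n x := by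
    intro n
    induction n with
    | zero => intro x; rfl
    | succ n ih =>
      intro x
      show (f n x * φ (n+1) ((f n x)⁻¹ • x))⁻¹ • x = a (n+1) x
      rw [mul_inv_rev, mul_smul, ih x]
      show a (n+1) (a n x) = a (n+1) x
      exact (ha_const (n+1) x (a n x) (hmono (Nat.le_succ n) (ha_mem n x))).symm
  have hcoh : ∀ n m, n ≤ m → ∀ x y, (x, y) ∈ Rn n →
      f m x * (f m y)⁻¹ = f n x * (f n y)⁻¹ := by
    intro n m hnm
    induction m, hnm using Nat.le_induction with
    | base => intro x y _; rfl
    | succ m hnm ih =>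
      intro x y hxy
      have key : a m x = a m y := ha_const m x y (hmono hnm hxy)
      calc f (m+1) x * (f (m+1) y)⁻¹
          = (f m x * φ (m+1) ((f m x)⁻¹ • x)) * (f m y * φ (m+1) ((f m y)⁻¹ • y))⁻¹ := rfl
        _ = (f m x * φ (m+1) (a m x)) * (f m y * φ (m+1) (a m y))⁻¹ := by
            rw [hbase m x, hbase m y]
        _ = f m x * (f m y)⁻¹ := by rw [key]; group
        _ = f n x * (f n y)⁻¹ := ih x y hxy
  -- the index function
  have hQex : ∀ p : X × X, ∃ n, p ∈ Rn n ∨ p ∉ R := by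
    intro p
    by_cases hp : p ∈ R
    · rw [← hunion] at hp
      obtain ⟨n, hn⟩ := Set.mem_iUnion.1 hp
      exact ⟨n, Or.inl hn⟩
    · exact ⟨0, Or.inr hp⟩
  set c : X → X → H := fun x y =>
    f (Nat.find (hQex (x, y))) x * (f (Nat.find (hQex (x, y))) y)⁻¹ with hc
  have hNmem : ∀ x y, (x, y) ∈ R → (x, y) ∈ Rn (Nat.find (hQex (x, y))) := by
    intro x y hxy
    exact (Nat.find_spec (hQex (x, y))).resolve_right (not_not_intro hxy)
  have hcG : ∀ x y, (x, y) ∈ R → ∀ m, Nat.find (hQex (x, y)) ≤ m →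
      c x y = f m x * (f m y)⁻¹ := by
    intro x y hxy m hm
    exact (hcoh _ m hm x y (hNmem x y hxy)).symm
  refine ⟨c, ?_, ?_, ?_, ?_⟩
  · -- measurability
    -- measurability of the selector sets
    have hAmeas : ∀ n k, MeasurableSet {x | P n k x} := by
      intro n k
      have m1 : ∀ k : ℕ, Measurable fun x : X => (x, (e k)⁻¹ • x) := fun k =>
        measurable_id.prodMk (hmeas _)
      have : {x | P n k x} =
          ((fun x : X => (x, (e k)⁻¹ • x)) ⁻¹' Rn n) ∩
            ⋂ j, (((fun x : X => (x, (e j)⁻¹ • x)) ⁻¹' Rn n)ᶜ ∪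
              {x | emb ((e k)⁻¹ • x) ≤ emb ((e j)⁻¹ • x)}) := by
        ext x
        simp only [hP, Set.mem_setOf_eq, Set.mem_inter_iff, Set.mem_preimage,
          Set.mem_iInter, Set.mem_union, Set.mem_compl_iff]
        refine and_congr Iff.rfl (forall_congr' fun j => ?_)
        tauto
      rw [this]
      refine ((m1 k) (hRmeas n)).inter (MeasurableSet.iInter fun j => ?_)
      exact ((m1 j) (hRmeas n)).compl.union
        (measurableSet_le (hemb.measurable.comp (hmeas _)) (hemb.measurable.comp (hmeas _)))
    have hφmeas : ∀ n, Measurable (φ n) := by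
      intro n
      have : Measurable fun x => Nat.find (exP n x) :=
        measurable_find (exP n) (hAmeas n)
      exact measurable_from_top.comp this
    -- measurable arithmetic on countable H
    have hmulinv : Measurable fun p : H × H => p.1 * p.2⁻¹ := measurable_of_countable _
    have hmul : Measurable fun p : H × H => p.1 * p.2 := measurable_of_countable _
    have hsmul : Measurable fun p : X × H => p.2⁻¹ • p.1 :=
      measurable_from_prod_countable_left fun g => hmeas g⁻¹
    have hfmeas : ∀ n, Measurable (f n) := by
      intro n
      induction n with
      | zero => exact hφmeas 0
      | succ n ih =>
        have h1 : Measurable fun x => (f n x)⁻¹ • x :=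
          hsmul.comp (measurable_id.prodMk ih)
        have h2 : Measurable fun x => φ (n+1) ((f n x)⁻¹ • x) := (hφmeas (n+1)).comp h1
        exact hmul.comp (ih.prodMk h2)
    set G : ℕ → X × X → H := fun n p => f n p.1 * (f n p.2)⁻¹ with hG
    have hGmeas : ∀ n, Measurable (G n) := by
      intro n
      exact hmulinv.comp (((hfmeas n).comp measurable_fst).prodMk
        ((hfmeas n).comp measurable_snd))
    have hRset : MeasurableSet R := by
      rw [← hunion]; exact MeasurableSet.iUnion hRmeas
    have hNF : Measurable fun p : X × X => Nat.find (hQex p) := by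
      refine measurable_find hQex fun k => ?_
      exact (hRmeas k).union hRset.compl
    refine measurable_to_countable' fun h => ?_
    have : (fun p : X × X => c p.1 p.2) ⁻¹' {h} =
        ⋃ n, ((fun p : X × X => Nat.find (hQex p)) ⁻¹' {n}) ∩ (G n ⁻¹' {h}) := by
      ext p
      simp only [Set.mem_preimage, Set.mem_singleton_iff, Set.mem_iUnion, Set.mem_inter_iff]
      constructor
      · intro hcp
        exact ⟨Nat.find (hQex p), rfl, hcp⟩
      · rintro ⟨n, h1, h2⟩
        show f (Nat.find (hQex (p.1, p.2))) p.1 * (f (Nat.find (hQex (p.1, p.2))) p.2)⁻¹ = h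
        rw [show hQex (p.1, p.2) = hQex p from rfl, h1]
        exact h2
    rw [this]
    exact MeasurableSet.iUnion fun n =>
      (hNF (measurableSet_singleton n)).inter (hGmeas n (measurableSet_singleton h))
  · -- c x x = 1
    intro x
    simp [hc]
  · -- inverse property
    intro x y hxy
    have hmem := hNmem x y hxy
    set N := Nat.find (hQex (x, y)) with hN
    show (f N x * (f N y)⁻¹)⁻¹ • x = y
    rw [mul_inv_rev, inv_inv, mul_smul, hbase N x, ha_const N x y hmem, ← hbase N y,
      smul_inv_smul]
  · -- cocycle identity
    intro x y z hxy hyz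
    have hxz : (x, z) ∈ R := by
      set m := max (Nat.find (hQex (x, y))) (Nat.find (hQex (y, z))) with hm
      have h1 : (x, y) ∈ Rn m := hmono (le_max_left _ _) (hNmem x y hxy)
      have h2 : (y, z) ∈ Rn m := hmono (le_max_right _ _) (hNmem y z hyz)
      exact hsub m (htrans m _ _ _ h1 h2)
    set m := max (Nat.find (hQex (x, y))) (max (Nat.find (hQex (y, z))) (Nat.find (hQex (x, z)))) with hm
    have e1 : c x y = f m x * (f m y)⁻¹ := hcG x y hxy m (le_max_left _ _)
    have e2 : c y z = f m y * (f m z)⁻¹ :=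
      hcG y z hyz m (le_trans (le_max_left _ _) (le_max_right _ _))
    have e3 : c x z = f m x * (f m z)⁻¹ :=
      hcG x z hxz m (le_trans (le_max_right _ _) (le_max_right _ _))
    rw [e1, e2, e3]
    group
end

section
/- Let H be a countable group with a central subgroup E, acting on X with E acting trivially, let ℋ = X ⋊ H, ℛ = ℛ(H/E ↷ X), and suppose σ : ℛ → ℋ is a Borel homomorphism section of the quotient q : ℋ → ℛ. Then the map ℛ × E → ℋ, (γ, a) ↦ σ(γ)·(s(γ), a), is a groupoid isomorphism from the direct product groupoid ℛ × E onto ℋ. -/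
open MeasureTheory

/-- Let `H` be a countable group with central subgroup `E` acting on `X` with `E` acting
trivially and the induced `H/E`-action free, let `ℋ = X ⋊ H`, `ℛ = ℛ(H/E ↷ X)`, and let
`σ : ℛ → ℋ` be a Borel homomorphism section of the quotient `q : ℋ → ℛ`, encoded by a cocycle
`c : X → X → H` with `σ(x,y) = (x, c x y)`.  Then the map `ℛ × E → ℋ`,
`((x,y), a) ↦ σ(x,y)·(y, a) = (x, c x y * a)`, is a groupoid isomorphism from the direct
product groupoid `ℛ × E` onto `ℋ`: it is injective on its domain `{((x,y),a) : (x,y) ∈ ℛ}`,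
surjective onto `X × H`, and multiplicative on composable pairs. -/
theorem section_gives_product_decomposition
    {H : Type*} [Group H] [Countable H] {X : Type*} [MeasurableSpace X]
    [StandardBorelSpace X] [MulAction H X]
    (E : Subgroup H) (hE : E ≤ Subgroup.center H)
    (htriv : ∀ a ∈ E, ∀ x : X, a • x = x)
    (hfree : ∀ (h : H) (x : X), h • x = x → h ∈ E)
    (R : Set (X × X)) (hR : R = {p : X × X | ∃ h : H, p.2 = h⁻¹ • p.1})
    (c : X → X → H)
    (hc1 : ∀ x : X, c x x = 1)
    (hc2 : ∀ x y : X, (x, y) ∈ R → (c x y)⁻¹ • x = y)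
    (hc3 : ∀ x y z : X, (x, y) ∈ R → (y, z) ∈ R → c x y * c y z = c x z) :
    Set.InjOn (fun p : (X × X) × E => (p.1.1, c p.1.1 p.1.2 * (p.2 : H)))
        {p : (X × X) × E | p.1 ∈ R} ∧
    (fun p : (X × X) × E => (p.1.1, c p.1.1 p.1.2 * (p.2 : H))) ''
        {p : (X × X) × E | p.1 ∈ R} = Set.univ ∧
    (∀ (x y z : X) (a b : E), (x, y) ∈ R → (y, z) ∈ R →
      (x, c x z * ((a * b : E) : H)) =
        (x, (c x y * (a : H)) * (c y z * (b : H)))) := by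
  refine ⟨?_, ?_, ?_⟩
  · rintro ⟨⟨x, y⟩, a⟩ hmem ⟨⟨x', y'⟩, a'⟩ hmem' heq
    simp only [Prod.mk.injEq] at heq
    obtain ⟨rfl, h2⟩ := heq
    have hy : y = y' := by
      have e1 : (c x y * (a : H))⁻¹ • x = y := by
        rw [mul_inv_rev, mul_smul, htriv a⁻¹ (inv_mem a.2)]
        exact hc2 x y hmem
      have e2 : (c x y' * (a' : H))⁻¹ • x = y' := by
        rw [mul_inv_rev, mul_smul, htriv a'⁻¹ (inv_mem a'.2)]
        exact hc2 x y' hmem'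
      rw [← e1, ← e2, h2]
    subst hy
    have : (a : H) = (a' : H) := by
      have := h2
      exact mul_left_cancel this
    simp only [Prod.mk.injEq]
    exact ⟨trivial, Subtype.ext this⟩
  · ext ⟨x, h⟩
    simp only [Set.mem_image, Set.mem_univ, iff_true]
    set y := h⁻¹ • x with hy
    have hmem : (x, y) ∈ R := by rw [hR]; exact ⟨h, rfl⟩
    have haE : (c x y)⁻¹ * h ∈ E := by
      apply hfree _ y
      rw [mul_smul, hy, smul_inv_smul, hc2 x y hmem]
    refine ⟨⟨(x, y), ⟨(c x y)⁻¹ * h, haE⟩⟩, hmem, ?_⟩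
    simp
  · intro x y z a b hxy hyz
    have hcomm : (a : H) * c y z = c y z * (a : H) :=
      (Subgroup.mem_center_iff.mp (hE a.2) (c y z)).symm
    simp only [Prod.mk.injEq, true_and, Subgroup.coe_mul]
    rw [← hc3 x y z hxy hyz]
    group
    rw [mul_assoc (c x y), ← hcomm, ← mul_assoc]
end
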